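/- arXiv:2405.16058 — 9 statements merged into one kernel-verified Lean document; each statement's English description precedes it below -/
import Mathlib

section
/- Let F_1, …, F_N : ℝ^d → ℝ each be μ-strongly convex and L-smooth (0 < μ ≤ L), let F = Σ_{i=1}^N p_i F_i have global minimizer w* with minimum value F*, let F_i* denote the minimum value of F_i, and set Γ = F* − Σ_{i=1}^N p_i F_i* (so Γ ≥ 0). Let w_1, …, w_N ∈ ℝ^d be fixed points, w̄ = Σ_i p_i w_i, ḡ = Σ_i p_i ∇F_i(w_i), and let g be a random vector in ℝ^d with E[g] = ḡ. If 0 < η ≤ 1/(4L), then E‖(w̄ − η g) − w*‖² ≤ (1 − ημ)‖w̄ − w*‖² + η²·E‖g − ḡ‖² + 6Lη²Γ + 2·Σ_{i=1}^N p_i‖w̄ − w_i‖². -/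
open MeasureTheory
open scoped RealInnerProductSpace

/-!
Averaging over `g` splits the expected squared step into the deterministic step `w̄ - η ḡ`
plus `η²` times the variance of `g`. In the deterministic step the cross term
`⟪w̄ - w*, ∇F_i(w_i)⟫` is split at `w_i`: Young's inequality handles `w̄ - w_i`, strong
convexity handles `w_i - w*`, and smoothness gives `‖∇F_i v‖² ≤ 2L (F_i v - F_i*)`. The values
`F_i(w_i)` are then traded for `F_i(w̄)` by convexity and Young once more, and what is left over
is the nonnegative multiple `2η(1 - 2Lη)(1 - Lη)` of `F(w̄) - F*`, which is dropped.
-/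

section InnerProductSpace

variable {E : Type*} [NormedAddCommGroup E] [InnerProductSpace ℝ E]

theorem neg_two_mul_inner_le (u v : E) (t : ℝ) :
    -(2 * t * ⟪u, v⟫) ≤ ‖u‖ ^ 2 + t ^ 2 * ‖v‖ ^ 2 := by
  have h := sq_nonneg ‖u + t • v‖
  rw [norm_add_sq_real, real_inner_smul_right, norm_smul, Real.norm_eq_abs, mul_pow,
    sq_abs] at h
  linarith

theorem norm_sub_smul_sq (u v : E) (t : ℝ) :
    ‖u - t • v‖ ^ 2 = ‖u‖ ^ 2 - 2 * t * ⟪u, v⟫ + t ^ 2 * ‖v‖ ^ 2 := by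
  rw [norm_sub_sq_real, real_inner_smul_right, norm_smul, Real.norm_eq_abs, mul_pow, sq_abs]
  ring

theorem norm_sum_smul_sq_le {ι : Type*} [Fintype ι] {p : ι → ℝ} (hp0 : ∀ i, 0 ≤ p i)
    (hp1 : ∑ i, p i = 1) (x : ι → E) :
    ‖∑ i, p i • x i‖ ^ 2 ≤ ∑ i, p i * ‖x i‖ ^ 2 :=
  (convexOn_univ_norm.pow (fun _ _ => norm_nonneg _) 2).map_sum_le (fun i _ => hp0 i) hp1
    (fun _ _ => Set.mem_univ _)

theorem integral_norm_sub_smul_sq [CompleteSpace E] {Ω : Type*} [MeasurableSpace Ω]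
    {P : Measure Ω} [IsProbabilityMeasure P] {g : Ω → E} {m : E} (hg : Integrable g P)
    (hmean : ∫ ω, g ω ∂P = m) (hvar : Integrable (fun ω => ‖g ω - m‖ ^ 2) P) (a : E) (t : ℝ) :
    ∫ ω, ‖a - t • g ω‖ ^ 2 ∂P = ‖a - t • m‖ ^ 2 + t ^ 2 * ∫ ω, ‖g ω - m‖ ^ 2 ∂P := by
  have hpoint : ∀ ω, ‖a - t • g ω‖ ^ 2
      = ‖a - t • m‖ ^ 2 - 2 * t * ⟪a - t • m, g ω - m⟫ + t ^ 2 * ‖g ω - m‖ ^ 2 := fun ω => by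
    rw [show a - t • g ω = (a - t • m) - t • (g ω - m) by module, norm_sub_smul_sq]
  have hcentered : Integrable (fun ω => g ω - m) P := hg.sub (integrable_const m)
  have hcross : ∫ ω, ⟪a - t • m, g ω - m⟫ ∂P = 0 := by
    rw [integral_inner hcentered, integral_sub hg (integrable_const m), hmean, integral_const,
      probReal_univ, one_smul, sub_self, inner_zero_right]
  have hcross_int : Integrable (fun ω => ‖a - t • m‖ ^ 2 - 2 * t * ⟪a - t • m, g ω - m⟫) P :=
    (integrable_const _).sub ((hcentered.const_inner _).const_mul _)
  simp_rw [hpoint]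
  rw [integral_add hcross_int (hvar.const_mul _),
    integral_sub (integrable_const _) ((hcentered.const_inner _).const_mul _),
    integral_const_mul, integral_const_mul, hcross, integral_const, probReal_univ, one_smul]
  ring

theorem sq_norm_le_of_smooth {f : E → ℝ} {f' : E → E} {L : ℝ} (hL : 0 < L)
    (hsmooth : ∀ v w, f v - f w - ⟪f' w, v - w⟫ ≤ L / 2 * ‖v - w‖ ^ 2)
    {xmin : E} (hmin : ∀ v, f xmin ≤ f v) (v : E) :
    ‖f' v‖ ^ 2 ≤ 2 * L * (f v - f xmin) := by
  have hstep := hsmooth (v - L⁻¹ • f' v) v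
  rw [sub_sub_cancel_left, inner_neg_right, real_inner_smul_right, real_inner_self_eq_norm_sq,
    norm_neg, norm_smul, Real.norm_eq_abs, mul_pow, sq_abs] at hstep
  have hdescent : L⁻¹ * ‖f' v‖ ^ 2 / 2 ≤ f v - f (v - L⁻¹ • f' v) := by
    have : L / 2 * (L⁻¹ ^ 2 * ‖f' v‖ ^ 2) = L⁻¹ * ‖f' v‖ ^ 2 / 2 := by field_simp
    linarith
  calc ‖f' v‖ ^ 2 = 2 * L * (L⁻¹ * ‖f' v‖ ^ 2 / 2) := by field_simp
    _ ≤ 2 * L * (f v - f (v - L⁻¹ • f' v)) := by gcongr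
    _ ≤ 2 * L * (f v - f xmin) := by gcongr; exact hmin _

theorem neg_two_mul_inner_grad_le {f : E → ℝ} {f' : E → E} {μ η : ℝ}
    (hstrong : ∀ v w, μ / 2 * ‖v - w‖ ^ 2 ≤ f v - f w - ⟪f' w, v - w⟫) (hη : 0 ≤ η)
    (a z y : E) :
    -(2 * η * ⟪a - z, f' y⟫)
      ≤ ‖a - y‖ ^ 2 + η ^ 2 * ‖f' y‖ ^ 2 + 2 * η * (f z - f y) - η * μ * ‖y - z‖ ^ 2 := by
  have hsplit : ⟪a - z, f' y⟫ = ⟪a - y, f' y⟫ - ⟪f' y, z - y⟫ := by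
    rw [show a - z = (a - y) - (z - y) by abel, inner_sub_left, real_inner_comm (z - y)]
  have hyoung := neg_two_mul_inner_le (a - y) (f' y) η
  have hconvex := mul_le_mul_of_nonneg_left (hstrong z y) hη
  rw [norm_sub_rev] at hconvex
  rw [hsplit]
  linarith

theorem two_mul_sub_le_of_strongConvex {f : E → ℝ} {f' : E → E} {μ η : ℝ} (hμ : 0 ≤ μ)
    (hstrong : ∀ v w, μ / 2 * ‖v - w‖ ^ 2 ≤ f v - f w - ⟪f' w, v - w⟫) (hη : 0 ≤ η) (a y : E) :
    2 * η * (f a - f y) ≤ ‖a - y‖ ^ 2 + η ^ 2 * ‖f' a‖ ^ 2 := by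
  have h := neg_two_mul_inner_grad_le hstrong hη y y a
  rw [sub_self, inner_zero_left, norm_sub_rev] at h
  linarith [mul_nonneg (mul_nonneg hη hμ) (sq_nonneg ‖a - y‖)]

theorem component_step_bound {f : E → ℝ} {f' : E → E} {μ L η : ℝ} (hμ : 0 ≤ μ) (hL : 0 < L)
    (hstrong : ∀ v w, μ / 2 * ‖v - w‖ ^ 2 ≤ f v - f w - ⟪f' w, v - w⟫)
    (hsmooth : ∀ v w, f v - f w - ⟪f' w, v - w⟫ ≤ L / 2 * ‖v - w‖ ^ 2)
    {xmin : E} (hmin : ∀ v, f xmin ≤ f v) (hη : 0 ≤ η) (hηL : 2 * L * η ≤ 1) (a z y : E) :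
    -(2 * η * ⟪a - z, f' y⟫) + η ^ 2 * ‖f' y‖ ^ 2
        + 2 * η * (1 - 2 * L * η) * (1 - L * η) * (f a - f z)
      ≤ 2 * ‖a - y‖ ^ 2 + 6 * L * η ^ 2 * (f z - f xmin) - η * μ * ‖y - z‖ ^ 2 := by
  have hcross := neg_two_mul_inner_grad_le hstrong hη a z y
  have hgrad_y := sq_norm_le_of_smooth hL hsmooth hmin y
  have hgap := two_mul_sub_le_of_strongConvex hμ hstrong hη a y
  have hgrad_a := sq_norm_le_of_smooth hL hsmooth hmin a
  have hfac : 0 ≤ 1 - 2 * L * η := by linarith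
  linarith [mul_le_mul_of_nonneg_left hgrad_y (sq_nonneg η),
    mul_le_mul_of_nonneg_left hgap hfac,
    mul_le_mul_of_nonneg_left hgrad_a (mul_nonneg hfac (sq_nonneg η)),
    mul_nonneg (mul_nonneg hL.le hη) (sq_nonneg ‖a - y‖),
    mul_nonneg (mul_nonneg (sq_nonneg L) (pow_nonneg hη 3)) (sub_nonneg.2 (hmin z))]

theorem norm_sub_smul_avg_grad_sq_le {ι : Type*} [Fintype ι] {p : ι → ℝ} (hp0 : ∀ i, 0 ≤ p i)
    (hp1 : ∑ i, p i = 1) {F : ι → E → ℝ} {F' : ι → E → E} {μ L η : ℝ} (hμ : 0 ≤ μ) (hL : 0 < L)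
    (hstrong : ∀ i v w, μ / 2 * ‖v - w‖ ^ 2 ≤ F i v - F i w - ⟪F' i w, v - w⟫)
    (hsmooth : ∀ i v w, F i v - F i w - ⟪F' i w, v - w⟫ ≤ L / 2 * ‖v - w‖ ^ 2)
    {wstar : E} (hmin : ∀ v, ∑ i, p i * F i wstar ≤ ∑ i, p i * F i v)
    {wistar : ι → E} (hmini : ∀ i v, F i (wistar i) ≤ F i v)
    (hη : 0 ≤ η) (hηL : 2 * L * η ≤ 1) (w : ι → E) :
    ‖∑ i, p i • w i - wstar - η • ∑ i, p i • F' i (w i)‖ ^ 2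
      ≤ (1 - η * μ) * ‖∑ i, p i • w i - wstar‖ ^ 2
        + 6 * L * η ^ 2 * (∑ i, p i * F i wstar - ∑ i, p i * F i (wistar i))
        + 2 * ∑ i, p i * ‖∑ j, p j • w j - w i‖ ^ 2 := by
  set wbar := ∑ i, p i • w i
  set κ := 2 * η * (1 - 2 * L * η) * (1 - L * η)
  have hsum := Finset.sum_le_sum fun i (_ : i ∈ Finset.univ) => mul_le_mul_of_nonneg_left
    (component_step_bound hμ hL (hstrong i) (hsmooth i) (hmini i) hη hηL wbar wstar (w i)) (hp0 i)
  have hlhs : ∑ i, p i * (-(2 * η * ⟪wbar - wstar, F' i (w i)⟫) + η ^ 2 * ‖F' i (w i)‖ ^ 2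
        + κ * (F i wbar - F i wstar))
      = -(2 * η * ⟪wbar - wstar, ∑ i, p i • F' i (w i)⟫) + η ^ 2 * ∑ i, p i * ‖F' i (w i)‖ ^ 2
        + κ * (∑ i, p i * F i wbar - ∑ i, p i * F i wstar) := by
    simp only [inner_sum, real_inner_smul_right, Finset.mul_sum, ← Finset.sum_neg_distrib,
      ← Finset.sum_add_distrib, ← Finset.sum_sub_distrib]
    exact Finset.sum_congr rfl fun i _ => by ring
  have hrhs : ∑ i, p i * (2 * ‖wbar - w i‖ ^ 2 + 6 * L * η ^ 2 * (F i wstar - F i (wistar i))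
        - η * μ * ‖w i - wstar‖ ^ 2)
      = 2 * ∑ i, p i * ‖wbar - w i‖ ^ 2
        + 6 * L * η ^ 2 * (∑ i, p i * F i wstar - ∑ i, p i * F i (wistar i))
        - η * μ * ∑ i, p i * ‖w i - wstar‖ ^ 2 := by
    simp only [Finset.mul_sum, ← Finset.sum_add_distrib, ← Finset.sum_sub_distrib]
    exact Finset.sum_congr rfl fun i _ => by ring
  have hgrad_avg := norm_sum_smul_sq_le hp0 hp1 fun i => F' i (w i)
  have hdist_avg : ‖wbar - wstar‖ ^ 2 ≤ ∑ i, p i * ‖w i - wstar‖ ^ 2 := by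
    have hcenter : wbar - wstar = ∑ i, p i • (w i - wstar) := by
      simp only [smul_sub, Finset.sum_sub_distrib, ← Finset.sum_smul, hp1, one_smul, wbar]
    rw [hcenter]
    exact norm_sum_smul_sq_le hp0 hp1 _
  have hκ : 0 ≤ κ := by
    have : 0 ≤ 1 - 2 * L * η := by linarith
    have : 0 ≤ 1 - L * η := by linarith [mul_nonneg hL.le hη]
    positivity
  rw [norm_sub_smul_sq]
  linarith [mul_le_mul_of_nonneg_left hgrad_avg (sq_nonneg η),
    mul_le_mul_of_nonneg_left hdist_avg (mul_nonneg hη hμ),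
    mul_nonneg hκ (sub_nonneg.2 (hmin wbar))]

end InnerProductSpace

theorem one_step_sgd_bound_general {d N : ℕ}
    {Ω : Type*} [MeasurableSpace Ω] (P : Measure Ω) [IsProbabilityMeasure P]
    (p : Fin N → ℝ) (hp0 : ∀ i, 0 ≤ p i) (hp1 : ∑ i, p i = 1)
    (μ L : ℝ) (hμ : 0 < μ) (hμL : μ ≤ L)
    (F : Fin N → EuclideanSpace ℝ (Fin d) → ℝ)
    (gradF : Fin N → EuclideanSpace ℝ (Fin d) → EuclideanSpace ℝ (Fin d))
    (hstrong : ∀ i v w, μ/2 * ‖v - w‖^2 ≤ F i v - F i w - ⟪gradF i w, v - w⟫)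
    (hsmooth : ∀ i v w, F i v - F i w - ⟪gradF i w, v - w⟫ ≤ L/2 * ‖v - w‖^2)
    (wstar : EuclideanSpace ℝ (Fin d))
    (hmin : ∀ v, (∑ i, p i * F i wstar) ≤ ∑ i, p i * F i v)
    (wistar : Fin N → EuclideanSpace ℝ (Fin d))
    (hmini : ∀ i v, F i (wistar i) ≤ F i v)
    (Γ : ℝ) (hΓ : Γ = (∑ i, p i * F i wstar) - ∑ i, p i * F i (wistar i))
    (w : Fin N → EuclideanSpace ℝ (Fin d))
    (wbar : EuclideanSpace ℝ (Fin d)) (hwbar : wbar = ∑ i, p i • w i)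
    (gbar : EuclideanSpace ℝ (Fin d)) (hgbar : gbar = ∑ i, p i • gradF i (w i))
    (g : Ω → EuclideanSpace ℝ (Fin d))
    (hgint : Integrable g P)
    (hg2int : Integrable (fun ω => ‖g ω - gbar‖^2) P)
    (hmean : ∫ ω, g ω ∂P = gbar)
    (η : ℝ) (hη0 : 0 < η) (hη : η ≤ 1/(4*L)) :
    ∫ ω, ‖(wbar - η • g ω) - wstar‖^2 ∂P
      ≤ (1 - η*μ) * ‖wbar - wstar‖^2 + η^2 * (∫ ω, ‖g ω - gbar‖^2 ∂P)
        + 6*L*η^2*Γ + 2 * ∑ i, p i * ‖wbar - w i‖^2 := by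
  have hL : 0 < L := hμ.trans_le hμL
  have hηL : 2 * L * η ≤ 1 := by
    rw [le_div_iff₀ (by positivity)] at hη
    linarith
  have hdet := norm_sub_smul_avg_grad_sq_le hp0 hp1 hμ.le hL hstrong hsmooth hmin hmini hη0.le hηL w
  rw [← hwbar, ← hgbar, ← hΓ] at hdet
  simp_rw [sub_right_comm wbar _ wstar]
  rw [integral_norm_sub_smul_sq hgint hmean hg2int]
  linarith

/-- Lemma 3 (one-step SGD descent bound): with `F_i` `μ`-strongly convex and `L`-smooth,
`F = ∑ p_i F_i` minimized at `w*`, `Γ = F* − ∑ p_i F_i*`, `w̄ = ∑ p_i w_i`,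
`ḡ = ∑ p_i ∇F_i(w_i)`, `E[g] = ḡ` and `0 < η ≤ 1/(4L)`:
`E‖(w̄ − η g) − w*‖² ≤ (1 − ημ)‖w̄ − w*‖² + η² E‖g − ḡ‖² + 6Lη²Γ + 2 ∑ p_i ‖w̄ − w_i‖²`. -/
theorem one_step_sgd_bound {d N : ℕ}
    {Ω : Type*} [MeasurableSpace Ω] (P : Measure Ω) [IsProbabilityMeasure P]
    (p : Fin N → ℝ) (hp0 : ∀ i, 0 ≤ p i) (hp1 : ∑ i, p i = 1)
    (μ L : ℝ) (hμ : 0 < μ) (hμL : μ ≤ L)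
    (F : Fin N → EuclideanSpace ℝ (Fin d) → ℝ)
    (gradF : Fin N → EuclideanSpace ℝ (Fin d) → EuclideanSpace ℝ (Fin d))
    (hgrad : ∀ i x, HasGradientAt (F i) (gradF i x) x)
    (hstrong : ∀ i v w, μ/2 * ‖v - w‖^2 ≤ F i v - F i w - ⟪gradF i w, v - w⟫)
    (hsmooth : ∀ i v w, F i v - F i w - ⟪gradF i w, v - w⟫ ≤ L/2 * ‖v - w‖^2)
    (wstar : EuclideanSpace ℝ (Fin d))
    (hmin : ∀ v, (∑ i, p i * F i wstar) ≤ ∑ i, p i * F i v)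
    (wistar : Fin N → EuclideanSpace ℝ (Fin d))
    (hmini : ∀ i v, F i (wistar i) ≤ F i v)
    (Γ : ℝ) (hΓ : Γ = (∑ i, p i * F i wstar) - ∑ i, p i * F i (wistar i))
    (w : Fin N → EuclideanSpace ℝ (Fin d))
    (wbar : EuclideanSpace ℝ (Fin d)) (hwbar : wbar = ∑ i, p i • w i)
    (gbar : EuclideanSpace ℝ (Fin d)) (hgbar : gbar = ∑ i, p i • gradF i (w i))
    (g : Ω → EuclideanSpace ℝ (Fin d))
    (hgint : Integrable g P)
    (hg2int : Integrable (fun ω => ‖g ω - gbar‖^2) P)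
    (hmean : ∫ ω, g ω ∂P = gbar)
    (η : ℝ) (hη0 : 0 < η) (hη : η ≤ 1/(4*L)) :
    ∫ ω, ‖(wbar - η • g ω) - wstar‖^2 ∂P
      ≤ (1 - η*μ) * ‖wbar - wstar‖^2 + η^2 * (∫ ω, ‖g ω - gbar‖^2 ∂P)
        + 6*L*η^2*Γ + 2 * ∑ i, p i * ‖wbar - w i‖^2 :=
  one_step_sgd_bound_general P p hp0 hp1 μ L hμ hμL F gradF hstrong hsmooth wstar hmin wistar hmini
    Γ hΓ w wbar hwbar gbar hgbar g hgint hg2int hmean η hη0 hη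
end

section
/- Let E ≥ 1 be an integer, let t_0 ≤ t be integers with t − t_0 ≤ E − 1, and let (η_τ)_{τ ≥ 0} be a positive nonincreasing sequence with η_{t_0} ≤ 2η_t. Suppose that for each i ∈ {1, …, N} there are random vectors g_{t_0}^i, …, g_{t−1}^i in ℝ^d with E‖g_τ^i‖² ≤ G, and set w_t^i = w_{t_0} − Σ_{τ=t_0}^{t−1} η_τ g_τ^i for a common point w_{t_0} ∈ ℝ^d, and w̄_t = Σ_{i=1}^N p_i w_t^i. Then E[ Σ_{i=1}^N p_i ‖w̄_t − w_t^i‖² ] ≤ 4 η_t² (E − 1)² G. -/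
/-!
Write `v_i = ∑_{τ ∈ [t₀, t)} η_τ g_τ^i`, so that `w_t^i = w_{t₀} - v_i`. The weighted spread of
points around their weighted mean is at most their weighted spread around any other point
(parallel axis theorem), in particular around `w_{t₀}`; this bounds the divergence by
`∑ p_i ‖v_i‖²`. By Cauchy–Schwarz `‖v_i‖² ≤ (t - t₀) ∑ η_τ² ‖g_τ^i‖²`, and `η_τ ≤ η_{t₀} ≤ 2 η_t`
with `t - t₀ ≤ E - 1`.
-/

open MeasureTheory Finset

section WeightedMean

variable {F ι : Type*} [NormedAddCommGroup F] [InnerProductSpace ℝ F] {s : Finset ι}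
  {p : ι → ℝ}

theorem sum_mul_norm_sub_sq_eq_add (hp : ∑ i ∈ s, p i = 1) (x : ι → F) (c : F) :
    ∑ i ∈ s, p i * ‖x i - c‖ ^ 2 =
      ∑ i ∈ s, p i * ‖x i - ∑ j ∈ s, p j • x j‖ ^ 2 + ‖∑ j ∈ s, p j • x j - c‖ ^ 2 := by
  set m := ∑ j ∈ s, p j • x j
  have hcross : ∑ i ∈ s, p i * inner ℝ (x i - m) (m - c) = 0 := by
    simp_rw [← real_inner_smul_left, ← sum_inner, smul_sub, sum_sub_distrib, ← sum_smul, hp,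
      one_smul]
    rw [sub_self, inner_zero_left]
  calc ∑ i ∈ s, p i * ‖x i - c‖ ^ 2
      = ∑ i ∈ s, p i * ‖(x i - m) + (m - c)‖ ^ 2 := by simp_rw [sub_add_sub_cancel]
    _ = ∑ i ∈ s, p i * ‖x i - m‖ ^ 2 + 2 * ∑ i ∈ s, p i * inner ℝ (x i - m) (m - c)
          + (∑ i ∈ s, p i) * ‖m - c‖ ^ 2 := by
        simp_rw [norm_add_sq_real, mul_sum, sum_mul, ← sum_add_distrib]
        exact sum_congr rfl fun i _ => by ring
    _ = _ := by rw [hcross, hp]; ring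

theorem sum_mul_norm_mean_sub_sq_le (hp : ∑ i ∈ s, p i = 1) (x : ι → F) (c : F) :
    ∑ i ∈ s, p i * ‖∑ j ∈ s, p j • x j - x i‖ ^ 2 ≤ ∑ i ∈ s, p i * ‖x i - c‖ ^ 2 := by
  simp_rw [sum_mul_norm_sub_sq_eq_add hp x c, norm_sub_rev (∑ j ∈ s, p j • x j)]
  exact le_add_of_nonneg_right (sq_nonneg _)

end WeightedMean

theorem norm_sum_sq_le_card_mul_sum_norm_sq {F ι : Type*} [SeminormedAddCommGroup F]
    (s : Finset ι) (f : ι → F) : ‖∑ i ∈ s, f i‖ ^ 2 ≤ #s * ∑ i ∈ s, ‖f i‖ ^ 2 :=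
  (pow_le_pow_left₀ (norm_nonneg _) (norm_sum_le s f) 2).trans sq_sum_le_card_mul_sum_sq

section SquaredNorm

variable {Ω F : Type*} [MeasurableSpace Ω] {P : Measure Ω} [SeminormedAddCommGroup F]
  [NormedSpace ℝ F] {f : Ω → F}

theorem MeasureTheory.Integrable.norm_const_smul_sq (hf : Integrable (fun ω => ‖f ω‖ ^ 2) P)
    (c : ℝ) :
    Integrable (fun ω => ‖c • f ω‖ ^ 2) P := by
  simpa [norm_smul, mul_pow] using hf.const_mul (c ^ 2)

theorem integral_norm_const_smul_sq_le {c B G : ℝ} (hf : ∫ ω, ‖f ω‖ ^ 2 ∂P ≤ G)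
    (hc : c ^ 2 ≤ B) : ∫ ω, ‖c • f ω‖ ^ 2 ∂P ≤ B * G := by
  simp_rw [norm_smul, Real.norm_eq_abs, mul_pow (|c|), sq_abs, integral_const_mul]
  exact mul_le_mul hc hf (integral_nonneg fun _ => sq_nonneg _) ((sq_nonneg c).trans hc)

end SquaredNorm

theorem integral_card_mul_sum_norm_sq_le {Ω F ι : Type*} [MeasurableSpace Ω] {P : Measure Ω}
    [SeminormedAddCommGroup F] (s : Finset ι) {f : ι → Ω → F} {C : ℝ}
    (hint : ∀ i ∈ s, Integrable (fun ω => ‖f i ω‖ ^ 2) P)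
    (hC : ∀ i ∈ s, ∫ ω, ‖f i ω‖ ^ 2 ∂P ≤ C) :
    ∫ ω, (#s * ∑ i ∈ s, ‖f i ω‖ ^ 2 : ℝ) ∂P ≤ #s ^ 2 * C := by
  rw [integral_const_mul, integral_finsetSum s hint, sq, mul_assoc]
  exact mul_le_mul_of_nonneg_left (by simpa using sum_le_card_nsmul s _ C hC) (Nat.cast_nonneg _)

theorem integral_le_of_le_sum_mul {Ω ι : Type*} [MeasurableSpace Ω] {P : Measure Ω}
    {s : Finset ι} {p : ι → ℝ} (hp0 : ∀ i ∈ s, 0 ≤ p i) (hp1 : ∑ i ∈ s, p i = 1)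
    {X : Ω → ℝ} {Y : ι → Ω → ℝ} {C : ℝ} (hX0 : 0 ≤ X) (hXY : ∀ ω, X ω ≤ ∑ i ∈ s, p i * Y i ω)
    (hY : ∀ i ∈ s, Integrable (Y i) P) (hC : ∀ i ∈ s, ∫ ω, Y i ω ∂P ≤ C) :
    ∫ ω, X ω ∂P ≤ C :=
  calc ∫ ω, X ω ∂P ≤ ∫ ω, ∑ i ∈ s, p i * Y i ω ∂P :=
        integral_mono_of_nonneg (.of_forall hX0)
          (integrable_finsetSum s fun i hi => (hY i hi).const_mul _) (.of_forall hXY)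
    _ = ∑ i ∈ s, p i * ∫ ω, Y i ω ∂P := by
        rw [integral_finsetSum s fun i hi => (hY i hi).const_mul _]
        simp_rw [integral_const_mul]
    _ ≤ ∑ i ∈ s, p i * C := sum_le_sum fun i hi => mul_le_mul_of_nonneg_left (hC i hi) (hp0 i hi)
    _ = C := by rw [← sum_mul, hp1, one_mul]

theorem local_model_divergence_bound_general {d N : ℕ}
    {Ω : Type*} [MeasurableSpace Ω] (P : Measure Ω)
    (p : Fin N → ℝ) (hp0 : ∀ i, 0 ≤ p i) (hp1 : ∑ i, p i = 1)
    (E : ℕ) (hE : 1 ≤ E) (t0 t : ℕ) (htE : t - t0 ≤ E - 1)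
    (η : ℕ → ℝ) (hηpos : ∀ τ, 0 < η τ) (hηmono : Antitone η) (hη2 : η t0 ≤ 2 * η t)
    (G : ℝ) (hG : 0 ≤ G)
    (g : Fin N → ℕ → Ω → EuclideanSpace ℝ (Fin d))
    (hint2 : ∀ i, ∀ τ ∈ Finset.Ico t0 t, Integrable (fun ω => ‖g i τ ω‖^2) P)
    (hbound : ∀ i, ∀ τ ∈ Finset.Ico t0 t, ∫ ω, ‖g i τ ω‖^2 ∂P ≤ G)
    (w0 : EuclideanSpace ℝ (Fin d))
    (wt : Fin N → Ω → EuclideanSpace ℝ (Fin d))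
    (hw : ∀ i ω, wt i ω = w0 - ∑ τ ∈ Finset.Ico t0 t, η τ • g i τ ω) :
    ∫ ω, (∑ i, p i * ‖(∑ j, p j • wt j ω) - wt i ω‖^2) ∂P
      ≤ 4 * (η t)^2 * ((E : ℝ) - 1)^2 * G := by
  set S := Ico t0 t
  have hS : (#S : ℝ) ≤ (E : ℝ) - 1 := by
    rw [← Nat.cast_one, ← Nat.cast_sub hE, Nat.cast_le, Nat.card_Ico]
    exact htE
  have hstep_int : ∀ i, ∀ τ ∈ S, Integrable (fun ω => ‖η τ • g i τ ω‖ ^ 2) P :=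
    fun i τ hτ => (hint2 i τ hτ).norm_const_smul_sq (η τ)
  have hstep : ∀ i, ∀ τ ∈ S, ∫ ω, ‖η τ • g i τ ω‖ ^ 2 ∂P ≤ (2 * η t) ^ 2 * G := fun i τ hτ =>
    integral_norm_const_smul_sq_le (hbound i τ hτ)
      (pow_le_pow_left₀ (hηpos τ).le ((hηmono (mem_Ico.1 hτ).1).trans hη2) 2)
  have hpointwise : ∀ ω, ∑ i, p i * ‖∑ j, p j • wt j ω - wt i ω‖ ^ 2 ≤
      ∑ i, p i * (#S * ∑ τ ∈ S, ‖η τ • g i τ ω‖ ^ 2) := fun ω =>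
    calc ∑ i, p i * ‖∑ j, p j • wt j ω - wt i ω‖ ^ 2 ≤ ∑ i, p i * ‖wt i ω - w0‖ ^ 2 :=
          sum_mul_norm_mean_sub_sq_le hp1 _ w0
      _ ≤ _ := sum_le_sum fun i _ => mul_le_mul_of_nonneg_left (by
          rw [hw, sub_sub_cancel_left, norm_neg]
          exact norm_sum_sq_le_card_mul_sum_norm_sq S _) (hp0 i)
  calc ∫ ω, (∑ i, p i * ‖∑ j, p j • wt j ω - wt i ω‖ ^ 2) ∂P ≤ #S ^ 2 * ((2 * η t) ^ 2 * G) :=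
        integral_le_of_le_sum_mul (fun i _ => hp0 i) hp1
          (fun ω => sum_nonneg fun i _ => mul_nonneg (hp0 i) (sq_nonneg _)) hpointwise
          (fun i _ => (integrable_finsetSum S (hstep_int i)).const_mul _)
          (fun i _ => integral_card_mul_sum_norm_sq_le S (hstep_int i) (hstep i))
    _ ≤ ((E : ℝ) - 1) ^ 2 * ((2 * η t) ^ 2 * G) :=
        mul_le_mul_of_nonneg_right (pow_le_pow_left₀ (Nat.cast_nonneg _) hS 2) (by positivity)
    _ = 4 * (η t) ^ 2 * ((E : ℝ) - 1) ^ 2 * G := by ring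

/-- Lemma 5 (divergence of local models): after at most `E − 1` local SGD steps of
step sizes `η_τ` from a common point `w₀`, with `E‖g_τ^i‖² ≤ G`, `η` positive
nonincreasing and `η_{t₀} ≤ 2 η_t`:
`E[∑ p_i ‖w̄_t − w_t^i‖²] ≤ 4 η_t² (E − 1)² G`. -/
theorem local_model_divergence_bound {d N : ℕ}
    {Ω : Type*} [MeasurableSpace Ω] (P : Measure Ω) [IsProbabilityMeasure P]
    (p : Fin N → ℝ) (hp0 : ∀ i, 0 ≤ p i) (hp1 : ∑ i, p i = 1)
    (E : ℕ) (hE : 1 ≤ E) (t0 t : ℕ) (ht0 : t0 ≤ t) (htE : t - t0 ≤ E - 1)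
    (η : ℕ → ℝ) (hηpos : ∀ τ, 0 < η τ) (hηmono : Antitone η) (hη2 : η t0 ≤ 2 * η t)
    (G : ℝ) (hG : 0 ≤ G)
    (g : Fin N → ℕ → Ω → EuclideanSpace ℝ (Fin d))
    (hint2 : ∀ i, ∀ τ ∈ Finset.Ico t0 t, Integrable (fun ω => ‖g i τ ω‖^2) P)
    (hbound : ∀ i, ∀ τ ∈ Finset.Ico t0 t, ∫ ω, ‖g i τ ω‖^2 ∂P ≤ G)
    (w0 : EuclideanSpace ℝ (Fin d))
    (wt : Fin N → Ω → EuclideanSpace ℝ (Fin d))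
    (hw : ∀ i ω, wt i ω = w0 - ∑ τ ∈ Finset.Ico t0 t, η τ • g i τ ω) :
    ∫ ω, (∑ i, p i * ‖(∑ j, p j • wt j ω) - wt i ω‖^2) ∂P
      ≤ 4 * (η t)^2 * ((E : ℝ) - 1)^2 * G :=
  local_model_divergence_bound_general P p hp0 hp1 E hE t0 t htE η hηpos hηmono hη2 G hG g hint2
    hbound w0 wt hw
end

section
/- Let S be a finite index set of size M, and for each i ∈ S let m_i ≥ 1 be an integer, let w_i^α and w_i^{β_n} (n = 1, …, m_i) be vectors in ℝ^d, let a_{i,n} be real weights, and let ε be a real number. Set w̄ = (1/M)·Σ_{j∈S} w_j^α and define the updated submodels by w_i^{α′} = w_i^α + ε(w̄ − w_i^α) + Σ_{n=1}^{m_i} a_{i,n}(w_i^{β_n} − w_i^α) and w_i^{β_n′} = w_i^{β_n} + a_{i,n}(w_i^α − w_i^{β_n}). Then Σ_{i∈S} ( w_i^{α′} + Σ_{n=1}^{m_i} w_i^{β_n′} ) = Σ_{i∈S} ( w_i^α + Σ_{n=1}^{m_i} w_i^{β_n} ), i.e., the total sum of all visible and invisible submodels is invariant under one round of the model-splitting update.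 -/
/-! Each exchange `a i n` moves mass between `wα i` and `wβ i n` with opposite signs, so it cancels
inside client `i`; the server pull `ε • (w̄ - wα i)` sums to zero over `S` because `w̄` is the mean
of the visible submodels. -/

open Finset

theorem Finset.sum_smul_sub_add_sum_add_smul_sub {R E ι : Type*} [Ring R] [AddCommGroup E]
    [Module R E] (s : Finset ι) (a : ι → R) (x : E) (y : ι → E) :
    ∑ n ∈ s, a n • (y n - x) + ∑ n ∈ s, (y n + a n • (x - y n)) = ∑ n ∈ s, y n := by
  rw [← sum_add_distrib]
  refine sum_congr rfl fun n _ => ?_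
  rw [smul_sub, smul_sub]
  abel

theorem Finset.sum_inv_card_smul_sum_sub {R E ι : Type*} [DivisionRing R] [CharZero R]
    [AddCommGroup E] [Module R E] {s : Finset ι} (hs : s.Nonempty) (v : ι → E) :
    ∑ i ∈ s, ((#s : R)⁻¹ • ∑ j ∈ s, v j - v i) = 0 := by
  have hcard : (#s : R) ≠ 0 := Nat.cast_ne_zero.mpr hs.card_pos.ne'
  rw [sum_sub_distrib, sum_const, ← Nat.cast_smul_eq_nsmul R, smul_smul,
    mul_inv_cancel₀ hcard, one_smul, sub_self]

theorem mspfl_sum_invariant_general {d : ℕ} {ι : Type*} (S : Finset ι) (M : ℕ)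
    (hcard : S.card = M) (hM : 0 < M)
    (m : ι → ℕ)
    (wα : ι → EuclideanSpace ℝ (Fin d))
    (wβ : ι → ℕ → EuclideanSpace ℝ (Fin d))
    (a : ι → ℕ → ℝ) (ε : ℝ) :
    ∑ i ∈ S,
        ((wα i + ε • ((M : ℝ)⁻¹ • ∑ j ∈ S, wα j - wα i)
            + ∑ n ∈ Finset.range (m i), a i n • (wβ i n - wα i))
          + ∑ n ∈ Finset.range (m i), (wβ i n + a i n • (wα i - wβ i n)))
      = ∑ i ∈ S, (wα i + ∑ n ∈ Finset.range (m i), wβ i n) := by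
  subst hcard
  simp_rw [add_assoc, sum_smul_sub_add_sum_add_smul_sub, ← add_assoc]
  rw [sum_add_distrib, sum_add_distrib, sum_add_distrib, ← smul_sum,
    sum_inv_card_smul_sum_sub (card_pos.mp hM), smul_zero, add_zero]

/-- Conservation of the total sum of visible and invisible submodels under one round
of the MSP-FL model-splitting update (one visible submodel `wα i` and `m i ≥ 1`
invisible submodels `wβ i n` per client `i` in the selected set `S` of size `M`). -/
theorem mspfl_sum_invariant {d : ℕ} {ι : Type*} (S : Finset ι) (M : ℕ)
    (hcard : S.card = M) (hM : 0 < M)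
    (m : ι → ℕ) (hm : ∀ i ∈ S, 1 ≤ m i)
    (wα : ι → EuclideanSpace ℝ (Fin d))
    (wβ : ι → ℕ → EuclideanSpace ℝ (Fin d))
    (a : ι → ℕ → ℝ) (ε : ℝ) :
    ∑ i ∈ S,
        ((wα i + ε • ((M : ℝ)⁻¹ • ∑ j ∈ S, wα j - wα i)
            + ∑ n ∈ Finset.range (m i), a i n • (wβ i n - wα i))
          + ∑ n ∈ Finset.range (m i), (wβ i n + a i n • (wα i - wβ i n)))
      = ∑ i ∈ S, (wα i + ∑ n ∈ Finset.range (m i), wβ i n) :=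
  mspfl_sum_invariant_general S M hcard hM m wα wβ a ε
end

section
/- Let μ > 0, ρ > 1/μ, θ > 0 with ρμ ≤ θ, and D ≥ 0. Let (a_t)_{t≥0} be a sequence of nonnegative reals satisfying a_{t+1} ≤ (1 − η_t μ)·a_t + η_t²·D for all t ≥ 0, where η_t = ρ/(θ + t). Then for every t ≥ 0, a_t ≤ ν/(θ + t), where ν = max{ ρ²D/(ρμ − 1), (θ + 1)·a_0 }. -/
/-! If `a_t ≤ ν/T` with `T = θ + t ≥ ρμ`, the recursion gives
`a_{t+1} ≤ ((T - ρμ) ν + ρ² D) / T²`, and the choice `ρ² D ≤ (ρμ - 1) ν` bounds this by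
`(T - 1) ν / T² ≤ ν / (T + 1)`; the second entry of the max in `ν` starts the induction. -/

lemma sub_one_mul_div_sq_le_div_add_one {T ν : ℝ} (hT : 0 < T) (hν : 0 ≤ ν) :
    (T - 1) * ν / T ^ 2 ≤ ν / (T + 1) := by
  rw [div_le_div_iff₀ (by positivity) (by positivity)]
  nlinarith

lemma contraction_step {μ ρ D ν T x y : ℝ} (hT : 0 < T) (hρμT : ρ * μ ≤ T) (hν : 0 ≤ ν)
    (hνD : ρ ^ 2 * D ≤ (ρ * μ - 1) * ν) (hx : x ≤ ν / T)
    (hy : y ≤ (1 - ρ / T * μ) * x + (ρ / T) ^ 2 * D) :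
    y ≤ ν / (T + 1) := by
  have hcoef : 0 ≤ 1 - ρ / T * μ := by
    rw [div_mul_eq_mul_div, sub_nonneg, div_le_one hT]
    exact hρμT
  calc y ≤ (1 - ρ / T * μ) * x + (ρ / T) ^ 2 * D := hy
    _ ≤ (1 - ρ / T * μ) * (ν / T) + (ρ / T) ^ 2 * D := by gcongr
    _ = ((T - ρ * μ) * ν + ρ ^ 2 * D) / T ^ 2 := by field_simp
    _ ≤ (T - 1) * ν / T ^ 2 := by gcongr; linarith
    _ ≤ ν / (T + 1) := sub_one_mul_div_sq_le_div_add_one hT hν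

theorem contraction_recursion_bound_general (μ ρ θ D : ℝ)
    (hμ : 0 < μ) (hρ : 1/μ < ρ) (hρμ : ρ * μ ≤ θ)
    (a : ℕ → ℝ) (ha : ∀ t, 0 ≤ a t)
    (hrec : ∀ t : ℕ, a (t+1) ≤ (1 - (ρ/(θ + (t : ℝ))) * μ) * a t + (ρ/(θ + (t : ℝ)))^2 * D) :
    ∀ t : ℕ, a t ≤ max (ρ^2 * D / (ρ*μ - 1)) ((θ + 1) * a 0) / (θ + (t : ℝ)) := by
  set ν := max (ρ^2 * D / (ρ*μ - 1)) ((θ + 1) * a 0)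
  have hρμ1 : 1 < ρ * μ := by rwa [div_lt_iff₀ hμ] at hρ
  have hθ : 0 < θ := by linarith
  have hν : 0 ≤ ν := (mul_nonneg (by linarith) (ha 0)).trans (le_max_right _ _)
  have hνD : ρ ^ 2 * D ≤ (ρ * μ - 1) * ν :=
    (div_le_iff₀' (by linarith)).1 (le_max_left _ _)
  intro t
  induction t with
  | zero =>
    rw [Nat.cast_zero, add_zero, le_div_iff₀ hθ]
    nlinarith [ha 0, le_max_right (ρ^2 * D / (ρ*μ - 1)) ((θ + 1) * a 0)]
  | succ t ih =>
    rw [Nat.cast_succ, ← add_assoc]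
    have hρμT : ρ * μ ≤ θ + t := by linarith [t.cast_nonneg (α := ℝ)]
    exact contraction_step (by linarith) hρμT hν hνD ih (hrec t)

/-- The contraction-to-`O(1/t)` induction lemma underlying Theorems 2 and 3:
if `a_{t+1} ≤ (1 - η_t μ) a_t + η_t² D` with `η_t = ρ/(θ + t)`, then
`a_t ≤ ν/(θ + t)` with `ν = max (ρ²D/(ρμ − 1)) ((θ+1) a₀)`. -/
theorem contraction_recursion_bound (μ ρ θ D : ℝ)
    (hμ : 0 < μ) (hρ : 1/μ < ρ) (hθ : 0 < θ) (hρμ : ρ * μ ≤ θ) (hD : 0 ≤ D)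
    (a : ℕ → ℝ) (ha : ∀ t, 0 ≤ a t)
    (hrec : ∀ t : ℕ, a (t+1) ≤ (1 - (ρ/(θ + (t : ℝ))) * μ) * a t + (ρ/(θ + (t : ℝ)))^2 * D) :
    ∀ t : ℕ, a t ≤ max (ρ^2 * D / (ρ*μ - 1)) ((θ + 1) * a 0) / (θ + (t : ℝ)) :=
  contraction_recursion_bound_general μ ρ θ D hμ hρ hρμ a ha hrec
end

section
/- Let 0 < μ ≤ L, let E ≥ 1 be an integer, let D ≥ 0, set θ = max{8L/μ, E} − 1 and η_t = 2/(μ(θ + t)). Let F : ℝ^d → ℝ be L-smooth with global minimizer w* and minimum value F*, and let (x_t)_{t≥0} be points in ℝ^d whose squared distances a_t = ‖x_t − w*‖² satisfy a_{t+1} ≤ (1 − η_t μ)·a_t + η_t²·D for all t ≥ 0. Then for every t ≥ 0, F(x_t) − F* ≤ (8L/(μ(θ + t)))·( 2D/μ + ((8L + μE)/2)·a_0 ). -/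
open scoped RealInnerProductSpace

/-!
At a minimiser the gradient vanishes, so `L`-smoothness gives `F(x_t) − F* ≤ (L/2) a_t`. With
`s = θ + t` the step size turns the recursion into `a_{t+1} ≤ (1 − 2/s) a_t + c/s²` with
`c = 4D/μ²`, and an induction shows `a_t ≤ v/s` for any `v ≥ max(c, θ a₀)`, since
`((s − 2) v + c)(s + 1) ≤ (s² − 1) v`. Taking `v = c + (θ + 1) a₀` and using
`θ + 1 ≤ 8L/μ + E` gives the stated constant.
-/

theorem IsLocalMin.hasGradientAt_eq_zero {F : Type*} [NormedAddCommGroup F]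
    [InnerProductSpace ℝ F] [CompleteSpace F] {f : F → ℝ} {g w : F}
    (hmin : IsLocalMin f w) (hg : HasGradientAt f g w) : g = 0 :=
  (InnerProductSpace.toDual ℝ F).map_eq_zero_iff.mp (hmin.hasFDerivAt_eq_zero hg.hasFDerivAt)

theorem IsLocalMin.sub_le_of_upper_quadratic {F : Type*} [NormedAddCommGroup F]
    [InnerProductSpace ℝ F] [CompleteSpace F] {f : F → ℝ} {g w : F} {L : ℝ}
    (hmin : IsLocalMin f w) (hg : HasGradientAt f g w)
    (hsmooth : ∀ v, f v - f w - ⟪g, v - w⟫ ≤ L / 2 * ‖v - w‖ ^ 2) (v : F) :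
    f v - f w ≤ L / 2 * ‖v - w‖ ^ 2 := by
  simpa [hmin.hasGradientAt_eq_zero hg] using hsmooth v

theorem le_div_of_le_one_sub_two_div_mul_add {θ c v : ℝ} {a : ℕ → ℝ} (hθ : 2 ≤ θ)
    (hv : 0 ≤ v) (hcv : c ≤ v) (h0 : θ * a 0 ≤ v)
    (hrec : ∀ t : ℕ, a (t + 1) ≤ (1 - 2 / (θ + t)) * a t + c / (θ + t) ^ 2) (t : ℕ) :
    a t ≤ v / (θ + t) := by
  induction t with
  | zero => simpa [le_div_iff₀ (by linarith : 0 < θ), mul_comm] using h0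
  | succ t ih =>
    set s : ℝ := θ + t
    have hs : 2 ≤ s := le_add_of_le_of_nonneg hθ t.cast_nonneg
    have hcoef : 0 ≤ 1 - 2 / s := by
      rw [sub_nonneg, div_le_one₀ (by linarith)]; exact hs
    have key : (1 - 2 / s) * (v / s) + c / s ^ 2 ≤ v / (s + 1) := by
      have hsum : (1 - 2 / s) * (v / s) + c / s ^ 2 = ((s - 2) * v + c) / s ^ 2 := by
        field_simp
      rw [hsum, div_le_div_iff₀ (by positivity) (by linarith)]
      nlinarith
    calc a (t + 1) ≤ (1 - 2 / s) * a t + c / s ^ 2 := hrec t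
      _ ≤ (1 - 2 / s) * (v / s) + c / s ^ 2 := by gcongr
      _ ≤ v / (θ + ↑(t + 1)) := by rw [Nat.cast_succ, ← add_assoc]; exact key

theorem le_div_of_descent_recursion {μ θ D : ℝ} {η a : ℕ → ℝ} (hμ : 0 < μ) (hθ : 2 ≤ θ)
    (hD : 0 ≤ D) (ha₀ : 0 ≤ a 0) (hη : ∀ t : ℕ, η t = 2 / (μ * (θ + t)))
    (hrec : ∀ t : ℕ, a (t + 1) ≤ (1 - η t * μ) * a t + η t ^ 2 * D) (t : ℕ) :
    a t ≤ (4 * D / μ ^ 2 + (θ + 1) * a 0) / (θ + t) := by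
  have hc : 0 ≤ 4 * D / μ ^ 2 := by positivity
  have hθa₀ : 0 ≤ (θ + 1) * a 0 := mul_nonneg (by linarith) ha₀
  refine le_div_of_le_one_sub_two_div_mul_add hθ (by linarith) (le_add_of_nonneg_right hθa₀)
    (by linarith [add_one_mul θ (a 0)]) (fun s => ?_) t
  have hs : 0 < θ + s := by linarith [s.cast_nonneg (α := ℝ)]
  have hstep : 1 - η s * μ = 1 - 2 / (θ + s) := by rw [hη]; field_simp
  have hnoise : η s ^ 2 * D = 4 * D / μ ^ 2 / (θ + s) ^ 2 := by rw [hη]; field_simp; ring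
  simpa only [hstep, hnoise] using hrec s

theorem half_mul_le_rate_constant {μ L D k a₀ : ℝ} {E : ℕ} (hμ : 0 < μ) (hL : 0 ≤ L)
    (hD : 0 ≤ D) (ha₀ : 0 ≤ a₀) (hk : k ≤ 8 * L / μ + E) :
    L / 2 * (4 * D / μ ^ 2 + k * a₀) ≤ 8 * L / μ * (2 * D / μ + (8 * L + μ * E) / 2 * a₀) := by
  have hD' : L / 2 * (4 * D / μ ^ 2) ≤ 8 * L / μ * (2 * D / μ) := by
    have hLD : 0 ≤ L * D / μ ^ 2 := by positivity
    linarith [show L / 2 * (4 * D / μ ^ 2) = 2 * (L * D / μ ^ 2) by ring,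
      show 8 * L / μ * (2 * D / μ) = 16 * (L * D / μ ^ 2) by ring]
  have ha₀' : L / 2 * (k * a₀) ≤ 8 * L / μ * ((8 * L + μ * E) / 2 * a₀) :=
    calc L / 2 * (k * a₀) ≤ L / 2 * ((8 * L / μ + E) * a₀) := by gcongr
      _ = L / μ * ((8 * L + μ * E) / 2 * a₀) := by field_simp
      _ ≤ 8 * L / μ * ((8 * L + μ * E) / 2 * a₀) := by gcongr; linarith
  rw [mul_add, mul_add]
  exact add_le_add hD' ha₀'

theorem convergence_rate_bound_general {d : ℕ}
    (μ L D : ℝ) (E : ℕ) (hμ : 0 < μ) (hμL : μ ≤ L) (hD : 0 ≤ D)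
    (θ : ℝ) (hθ : θ = max (8*L/μ) (E : ℝ) - 1)
    (η : ℕ → ℝ) (hη : ∀ t : ℕ, η t = 2/(μ*(θ + (t : ℝ))))
    (F : EuclideanSpace ℝ (Fin d) → ℝ)
    (gradF : EuclideanSpace ℝ (Fin d) → EuclideanSpace ℝ (Fin d))
    (hgrad : ∀ x, HasGradientAt F (gradF x) x)
    (hsmooth : ∀ v w, F v - F w - ⟪gradF w, v - w⟫ ≤ L/2 * ‖v - w‖^2)
    (wstar : EuclideanSpace ℝ (Fin d)) (hmin : ∀ v, F wstar ≤ F v)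
    (x : ℕ → EuclideanSpace ℝ (Fin d))
    (hrec : ∀ t : ℕ, ‖x (t+1) - wstar‖^2
      ≤ (1 - η t * μ) * ‖x t - wstar‖^2 + (η t)^2 * D) :
    ∀ t : ℕ, F (x t) - F wstar
      ≤ (8*L/(μ*(θ + (t : ℝ))))
          * (2*D/μ + ((8*L + μ*(E : ℝ))/2) * ‖x 0 - wstar‖^2) := by
  intro t
  have hL : 0 < L := hμ.trans_le hμL
  have hθ_add_one : 8 ≤ θ + 1 ∧ θ + 1 ≤ 8 * L / μ + E := by
    have : 8 ≤ 8 * L / μ := by rw [le_div_iff₀ hμ]; linarith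
    constructor <;> rw [hθ, sub_add_cancel]
    · exact this.trans (le_max_left _ _)
    · exact max_le_add_of_nonneg (by linarith) E.cast_nonneg
  have hrate := le_div_of_descent_recursion (a := fun t => ‖x t - wstar‖ ^ 2) hμ (by linarith)
    hD (sq_nonneg _) hη hrec t
  have hs : 0 < θ + t := by linarith [t.cast_nonneg (α := ℝ)]
  calc F (x t) - F wstar ≤ L / 2 * ‖x t - wstar‖ ^ 2 :=
        IsLocalMin.sub_le_of_upper_quadratic (Filter.Eventually.of_forall hmin)
          (hgrad wstar) (fun v => hsmooth v wstar) (x t)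
    _ ≤ L / 2 * (4 * D / μ ^ 2 + (θ + 1) * ‖x 0 - wstar‖ ^ 2) / (θ + t) := by
      rw [mul_div_assoc]; gcongr
    _ ≤ 8 * L / μ * (2 * D / μ + (8 * L + μ * E) / 2 * ‖x 0 - wstar‖ ^ 2) / (θ + t) :=
      div_le_div_of_nonneg_right
        (half_mul_le_rate_constant hμ hL.le hD (sq_nonneg _) hθ_add_one.2) hs.le
    _ = _ := by field_simp

/-- The quantitative `O(1/t)` convergence conclusion of Theorem 2 (and Theorem 3):
with `θ = max(8L/μ, E) − 1`, `η_t = 2/(μ(θ + t))`, `F` `L`-smooth with minimizer `w*`,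
and iterates whose squared distances `a_t = ‖x_t − w*‖²` satisfy the descent recursion
`a_{t+1} ≤ (1 − η_t μ) a_t + η_t² D`, one has
`F(x_t) − F* ≤ (8L/(μ(θ+t))) (2D/μ + ((8L + μE)/2) a₀)`. -/
theorem convergence_rate_bound {d : ℕ}
    (μ L D : ℝ) (E : ℕ) (hμ : 0 < μ) (hμL : μ ≤ L) (hE : 1 ≤ E) (hD : 0 ≤ D)
    (θ : ℝ) (hθ : θ = max (8*L/μ) (E : ℝ) - 1)
    (η : ℕ → ℝ) (hη : ∀ t : ℕ, η t = 2/(μ*(θ + (t : ℝ))))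
    (F : EuclideanSpace ℝ (Fin d) → ℝ)
    (gradF : EuclideanSpace ℝ (Fin d) → EuclideanSpace ℝ (Fin d))
    (hgrad : ∀ x, HasGradientAt F (gradF x) x)
    (hsmooth : ∀ v w, F v - F w - ⟪gradF w, v - w⟫ ≤ L/2 * ‖v - w‖^2)
    (wstar : EuclideanSpace ℝ (Fin d)) (hmin : ∀ v, F wstar ≤ F v)
    (x : ℕ → EuclideanSpace ℝ (Fin d))
    (hrec : ∀ t : ℕ, ‖x (t+1) - wstar‖^2
      ≤ (1 - η t * μ) * ‖x t - wstar‖^2 + (η t)^2 * D) :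
    ∀ t : ℕ, F (x t) - F wstar
      ≤ (8*L/(μ*(θ + (t : ℝ))))
          * (2*D/μ + ((8*L + μ*(E : ℝ))/2) * ‖x 0 - wstar‖^2) :=
  convergence_rate_bound_general μ L D E hμ hμL hD θ hθ η hη F gradF hgrad hsmooth wstar hmin x hrec
end

section
/- Let M ≥ 2, d ≥ 1, ε ∈ (0, M/(M−1)), Θ = I − (1/M)·𝟙𝟙ᵀ ∈ ℝ^{M×M}, and λ = |1 − ε| (so 0 ≤ λ < 1). Let (W^α[k])_{k≥0}, (W^β[k])_{k≥0}, (Δ[k])_{k≥0} be sequences of M × d real matrices, set Q[k] = W^α[k] + Δ[k] and let q̄[k] ∈ ℝ^d be the average of the rows of Q[k]. Let A[k] be diagonal M × M matrices with nonnegative diagonal entries all at most a_max[k]. Suppose the rows of W^α[0] are all equal, and for every k and every row index i the dynamics w_i^α[k+1] = w_i^α[k] + ε(q̄[k] − q_i[k]) + a_i[k]·(w_i^β[k] − w_i^α[k]) hold, where w_i^α, w_i^β, q_i denote the i-th rows and a_i[k] the i-th diagonal entry of A[k]. Then for every k ≥ 0, ‖Θ·W^α[k+1]‖_F ≤ 2·Σ_{l=0}^{k}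 λ^{k−l}·‖Δ[l]‖_F + W̃·Σ_{l=0}^{k} λ^{k−l}·a_max[l], where W̃ = max_{0 ≤ l ≤ k} ‖W^β[l] − W^α[l]‖_F. -/
/-!
Write `Θ` for the centering map `W ↦ W − 𝟙 w̄`. It is linear, idempotent and, being the orthogonal
projection onto the disagreement subspace, does not increase the Frobenius norm. Applying `Θ` to
the dynamics, whose consensus term is `−ε Θ Q[k]`, gives
`Θ W^α[k+1] = (1 − ε) Θ W^α[k] − ε Θ Δ[k] + Θ A[k] (W^β[k] − W^α[k])`, hence
`‖Θ W^α[k+1]‖ ≤ λ ‖Θ W^α[k]‖ + 2 ‖Δ[k]‖ + a_max[k] ‖W^β[k] − W^α[k]‖`, using `ε < M/(M−1) ≤ 2`.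
Unrolling this linear recursion from `Θ W^α[0] = 0` gives the bound.
-/

/-- Frobenius norm of an `M × d` matrix given by its rows in `ℝ^d`. -/
noncomputable def frob {M d : ℕ} (W : Fin M → EuclideanSpace ℝ (Fin d)) : ℝ :=
  Real.sqrt (∑ i, ‖W i‖^2)

open Finset

theorem le_pow_mul_add_sum_of_le_mul_add {R : Type*} [CommSemiring R] [PartialOrder R]
    [IsOrderedRing R] {x b : ℕ → R} {r : R} (hr : 0 ≤ r) (h : ∀ n, x (n + 1) ≤ r * x n + b n)
    (k : ℕ) : x (k + 1) ≤ r ^ (k + 1) * x 0 + ∑ l ∈ range (k + 1), r ^ (k - l) * b l := by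
  induction k with
  | zero => simpa using h 0
  | succ k ih =>
    have hsum : ∑ l ∈ range (k + 2), r ^ (k + 1 - l) * b l
        = r * ∑ l ∈ range (k + 1), r ^ (k - l) * b l + b (k + 1) := by
      rw [sum_range_succ, Nat.sub_self, pow_zero, one_mul, mul_sum]
      congr 1
      refine sum_congr rfl fun l hl => ?_
      rw [show k + 1 - l = k - l + 1 by have := mem_range.mp hl; omega, pow_succ]
      ring
    calc x (k + 2) ≤ r * x (k + 1) + b (k + 1) := h (k + 1)
      _ ≤ r * (r ^ (k + 1) * x 0 + ∑ l ∈ range (k + 1), r ^ (k - l) * b l) + b (k + 1) := by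
        gcongr
      _ = r ^ (k + 2) * x 0 + ∑ l ∈ range (k + 2), r ^ (k + 1 - l) * b l := by
        rw [hsum]; ring

section Centering

variable {M : ℕ} {E : Type*}

/-- The matrix `Θ = I − (1/M) 𝟙𝟙ᵀ` acting on the stacked rows. -/
noncomputable def centering [AddCommGroup E] [Module ℝ E] : (Fin M → E) →ₗ[ℝ] (Fin M → E) where
  toFun W := fun i => W i - (M : ℝ)⁻¹ • ∑ j, W j
  map_add' W V := by
    funext i
    simp only [Pi.add_apply, sum_add_distrib, smul_add]
    abel
  map_smul' c W := by
    funext i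
    simp only [Pi.smul_apply, ← smul_sum, smul_sub, RingHom.id_apply, smul_comm c]

section Module

variable [AddCommGroup E] [Module ℝ E]

theorem centering_apply (W : Fin M → E) (i : Fin M) :
    centering W i = W i - (M : ℝ)⁻¹ • ∑ j, W j :=
  rfl

theorem sum_centering (W : Fin M → E) : ∑ i, centering W i = 0 := by
  rcases Nat.eq_zero_or_pos M with rfl | hpos
  · simp
  · have hM : (M : ℝ) ≠ 0 := by positivity
    simp only [centering_apply, sum_sub_distrib, sum_const, card_univ, Fintype.card_fin,
      ← Nat.cast_smul_eq_nsmul ℝ, smul_smul, mul_inv_cancel₀ hM, one_smul, sub_self]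

theorem centering_centering (W : Fin M → E) : centering (centering W) = centering W := by
  funext i
  rw [centering_apply, sum_centering, smul_zero, sub_zero]

theorem centering_eq_zero_of_forall_eq {W : Fin M → E} (hW : ∀ i j, W i = W j) :
    centering W = 0 := by
  funext i
  have hM : (M : ℝ) ≠ 0 := by have := i.pos; positivity
  have hsum : ∑ j, W j = (M : ℝ) • W i := by
    rw [sum_congr rfl fun j _ => hW j i, sum_const, card_univ, Fintype.card_fin,
      ← Nat.cast_smul_eq_nsmul ℝ]
  rw [centering_apply, hsum, smul_smul, inv_mul_cancel₀ hM, one_smul, sub_self, Pi.zero_apply]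

end Module

/-- Pythagoras for the orthogonal splitting `W = Θ W + 𝟙 w̄`. -/
theorem sum_norm_centering_sq_le [NormedAddCommGroup E] [InnerProductSpace ℝ E]
    (W : Fin M → E) : ∑ i, ‖centering W i‖ ^ 2 ≤ ∑ i, ‖W i‖ ^ 2 := by
  set m : E := (M : ℝ)⁻¹ • ∑ j, W j
  have hW : ∀ i, W i = centering W i + m := fun i => by rw [centering_apply, sub_add_cancel]
  calc ∑ i, ‖centering W i‖ ^ 2 ≤ ∑ i, ‖centering W i‖ ^ 2 + M * ‖m‖ ^ 2 :=
        le_add_of_nonneg_right (by positivity)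
    _ = ∑ i, (‖centering W i‖ ^ 2 + 2 * inner ℝ (centering W i) m + ‖m‖ ^ 2) := by
        rw [sum_add_distrib, sum_add_distrib, ← mul_sum, ← sum_inner, sum_centering,
          inner_zero_left]
        simp
    _ = ∑ i, ‖W i‖ ^ 2 := sum_congr rfl fun i _ => by rw [hW i, norm_add_sq_real]

end Centering

section Frobenius

variable {M d : ℕ}

theorem frob_eq_norm (W : Fin M → EuclideanSpace ℝ (Fin d)) :
    frob W = ‖WithLp.toLp 2 W‖ := by
  rw [PiLp.norm_eq_of_L2]; rfl

theorem frob_nonneg (W : Fin M → EuclideanSpace ℝ (Fin d)) : 0 ≤ frob W :=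
  Real.sqrt_nonneg _

theorem frob_add_le (W V : Fin M → EuclideanSpace ℝ (Fin d)) :
    frob (W + V) ≤ frob W + frob V := by
  simpa only [frob_eq_norm, WithLp.toLp_add] using norm_add_le _ _

theorem frob_sub_le (W V : Fin M → EuclideanSpace ℝ (Fin d)) :
    frob (W - V) ≤ frob W + frob V := by
  simpa only [frob_eq_norm, WithLp.toLp_sub] using norm_sub_le _ _

theorem frob_smul (c : ℝ) (W : Fin M → EuclideanSpace ℝ (Fin d)) :
    frob (c • W) = |c| * frob W := by
  rw [frob_eq_norm, frob_eq_norm, WithLp.toLp_smul, norm_smul, Real.norm_eq_abs]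

theorem frob_zero : frob (0 : Fin M → EuclideanSpace ℝ (Fin d)) = 0 := by
  simp [frob]

theorem frob_centering_le (W : Fin M → EuclideanSpace ℝ (Fin d)) :
    frob (centering W) ≤ frob W :=
  Real.sqrt_le_sqrt (sum_norm_centering_sq_le W)

theorem frob_smul_rows_le {a : Fin M → ℝ} {c : ℝ} (hc : 0 ≤ c) (ha : ∀ i, |a i| ≤ c)
    (W : Fin M → EuclideanSpace ℝ (Fin d)) : frob (fun i => a i • W i) ≤ c * frob W := by
  have hsq : ∑ i, ‖a i • W i‖ ^ 2 ≤ c ^ 2 * ∑ i, ‖W i‖ ^ 2 := by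
    rw [mul_sum]
    gcongr with i
    rw [norm_smul, Real.norm_eq_abs, mul_pow]
    gcongr
    exact ha i
  calc frob (fun i => a i • W i) ≤ Real.sqrt (c ^ 2 * ∑ i, ‖W i‖ ^ 2) := Real.sqrt_le_sqrt hsq
    _ = c * frob W := by rw [Real.sqrt_mul (sq_nonneg c), Real.sqrt_sq hc, frob]

theorem frob_centering_update_le {ε c : ℝ} {a : Fin M → ℝ} (hc : 0 ≤ c) (ha : ∀ i, |a i| ≤ c)
    {W W' Δ : Fin M → EuclideanSpace ℝ (Fin d)} (V : Fin M → EuclideanSpace ℝ (Fin d))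
    (hW' : ∀ i, W' i = W i + ε • ((M : ℝ)⁻¹ • ∑ j, (W j + Δ j) - (W i + Δ i)) + a i • V i) :
    frob (centering W') ≤ |1 - ε| * frob (centering W) + |ε| * frob Δ + c * frob V := by
  have hW'_eq : W' = W - ε • centering (W + Δ) + fun i => a i • V i := by
    funext i
    rw [hW' i]
    simp only [Pi.add_apply, Pi.sub_apply, Pi.smul_apply, centering_apply]
    module
  have hΘ : centering W' = ((1 - ε) • centering W - ε • centering Δ)
      + centering (fun i => a i • V i) := by
    rw [hW'_eq, map_add, map_sub, map_smul, centering_centering, map_add]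
    module
  rw [hΘ]
  calc _ ≤ frob ((1 - ε) • centering W) + frob (ε • centering Δ)
        + frob (centering fun i => a i • V i) :=
        (frob_add_le _ _).trans (add_le_add_left (frob_sub_le _ _) _)
    _ = |1 - ε| * frob (centering W) + |ε| * frob (centering Δ)
        + frob (centering fun i => a i • V i) := by rw [frob_smul, frob_smul]
    _ ≤ _ := by
      gcongr
      · exact frob_centering_le Δ
      · exact (frob_centering_le _).trans (frob_smul_rows_le hc ha V)

end Frobenius

theorem abs_le_two_of_lt_div_sub_one {M ε : ℝ} (hM : 2 ≤ M) (hε0 : 0 < ε)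
    (hε1 : ε < M / (M - 1)) : |ε| ≤ 2 := by
  have : M / (M - 1) ≤ 2 := by rw [div_le_iff₀ (by linarith)]; linarith
  exact abs_le.mpr ⟨by linarith, by linarith⟩

theorem consensus_deviation_bound_general {M d : ℕ} (hM : 2 ≤ M)
    (ε : ℝ) (hε0 : 0 < ε) (hε1 : ε < (M : ℝ)/((M : ℝ) - 1))
    (Wα Wβ Δ : ℕ → Fin M → EuclideanSpace ℝ (Fin d))
    (a : ℕ → Fin M → ℝ) (amax : ℕ → ℝ)
    (ha0 : ∀ k i, 0 ≤ a k i) (ha1 : ∀ k i, a k i ≤ amax k)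
    (h0 : ∀ i j, Wα 0 i = Wα 0 j)
    (hdyn : ∀ k i, Wα (k+1) i
      = Wα k i
        + ε • ((M : ℝ)⁻¹ • (∑ j, (Wα k j + Δ k j)) - (Wα k i + Δ k i))
        + a k i • (Wβ k i - Wα k i)) :
    ∀ k : ℕ,
      frob (fun i => Wα (k+1) i - (M : ℝ)⁻¹ • ∑ j, Wα (k+1) j)
        ≤ 2 * ∑ l ∈ Finset.range (k+1), |1 - ε| ^ (k - l) * frob (Δ l)
          + ((Finset.range (k+1)).sup' Finset.nonempty_range_add_one
                (fun l => frob (fun i => Wβ l i - Wα l i)))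
            * ∑ l ∈ Finset.range (k+1), |1 - ε| ^ (k - l) * amax l := by
  have hε : |ε| ≤ 2 := abs_le_two_of_lt_div_sub_one (by exact_mod_cast hM) hε0 hε1
  have hamax : ∀ k, 0 ≤ amax k := fun k => (ha0 k ⟨0, by omega⟩).trans (ha1 k _)
  have hstep : ∀ n, frob (centering (Wα (n + 1))) ≤ |1 - ε| * frob (centering (Wα n))
      + (2 * frob (Δ n) + amax n * frob (fun i => Wβ n i - Wα n i)) := fun n => by
    have := frob_centering_update_le (hamax n)
      (fun i => (abs_of_nonneg (ha0 n i)).trans_le (ha1 n i)) _ (hdyn n)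
    have := mul_le_mul_of_nonneg_right hε (frob_nonneg (Δ n))
    linarith
  intro k
  have hunroll := le_pow_mul_add_sum_of_le_mul_add (x := fun n => frob (centering (Wα n)))
    (abs_nonneg _) hstep k
  rw [centering_eq_zero_of_forall_eq h0, frob_zero, mul_zero, zero_add] at hunroll
  set Wt := (range (k + 1)).sup' nonempty_range_add_one fun l => frob fun i => Wβ l i - Wα l i
  calc frob (centering (Wα (k + 1)))
      ≤ ∑ l ∈ range (k + 1), |1 - ε| ^ (k - l)
          * (2 * frob (Δ l) + amax l * frob (fun i => Wβ l i - Wα l i)) := hunroll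
    _ ≤ ∑ l ∈ range (k + 1), |1 - ε| ^ (k - l) * (2 * frob (Δ l) + amax l * Wt) := by
      gcongr with l hl
      · exact hamax l
      · exact le_sup' (fun l => frob fun i => Wβ l i - Wα l i) hl
    _ = _ := by
      rw [mul_sum, mul_sum, ← sum_add_distrib]
      exact sum_congr rfl fun l _ => by ring

/-- Lemma 9 (consensus deviation bound for MSPDQ-FL): with `Θ = I − (1/M)𝟙𝟙ᵀ`,
`λ = |1 − ε|`, quantized values `Q[k] = W^α[k] + Δ[k]` with row average `q̄[k]`,
and the dynamics `wᵢ^α[k+1] = wᵢ^α[k] + ε (q̄[k] − qᵢ[k]) + aᵢ[k](wᵢ^β[k] − wᵢ^α[k])`,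
the deviation of the visible submodels from their average satisfies
`‖Θ W^α[k+1]‖_F ≤ 2 ∑ λ^{k−l} ‖Δ[l]‖_F + W̃ ∑ λ^{k−l} a_max[l]`. -/
theorem consensus_deviation_bound {M d : ℕ} (hM : 2 ≤ M) (hd : 1 ≤ d)
    (ε : ℝ) (hε0 : 0 < ε) (hε1 : ε < (M : ℝ)/((M : ℝ) - 1))
    (Wα Wβ Δ : ℕ → Fin M → EuclideanSpace ℝ (Fin d))
    (a : ℕ → Fin M → ℝ) (amax : ℕ → ℝ)
    (ha0 : ∀ k i, 0 ≤ a k i) (ha1 : ∀ k i, a k i ≤ amax k)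
    (h0 : ∀ i j, Wα 0 i = Wα 0 j)
    (hdyn : ∀ k i, Wα (k+1) i
      = Wα k i
        + ε • ((M : ℝ)⁻¹ • (∑ j, (Wα k j + Δ k j)) - (Wα k i + Δ k i))
        + a k i • (Wβ k i - Wα k i)) :
    ∀ k : ℕ,
      frob (fun i => Wα (k+1) i - (M : ℝ)⁻¹ • ∑ j, Wα (k+1) j)
        ≤ 2 * ∑ l ∈ Finset.range (k+1), |1 - ε| ^ (k - l) * frob (Δ l)
          + ((Finset.range (k+1)).sup' Finset.nonempty_range_add_one
                (fun l => frob (fun i => Wβ l i - Wα l i)))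
            * ∑ l ∈ Finset.range (k+1), |1 - ε| ^ (k - l) * amax l :=
  consensus_deviation_bound_general hM ε hε0 hε1 Wα Wβ Δ a amax ha0 ha1 h0 hdyn
end

section
/- Let λ ∈ (0, 1) and γ > 0, and suppose λ^j ≤ 1/(j + 1) for every integer j ≥ 0. Then for every integer k ≥ 0, Σ_{l=0}^{k} λ^{k−l} · γ/(l + 1) ≤ 4γ / ((1 − λ)(k + 1)). -/
/-!
Split the sum at the midpoint `m = ⌊(k+1)/2⌋`. For `l ≥ m` the step size `1/(l+1)` is at most
`2/(k+1)`, and the remaining weights `λ^(k-l)` form a geometric series bounded by `1/(1-λ)`.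
For `l < m` the exponent satisfies `k - l ≥ k - m ≥ (k-1)/2`, so the factor `λ^(k-m) ≤ 1/(k-m+1)`
is at most `2/(k+1)`, and what is left, `λ^(m-l)`, is again a geometric series.
-/

open Finset

lemma one_div_succ_le_two_div {k l : ℕ} (h : k + 1 ≤ 2 * (l + 1)) :
    1 / ((l : ℝ) + 1) ≤ 2 / ((k : ℝ) + 1) := by
  have h' : (k : ℝ) + 1 ≤ 2 * ((l : ℝ) + 1) := by exact_mod_cast h
  rw [div_le_div_iff₀ (by positivity) (by positivity)]
  linarith

lemma sum_pow_sub_le_of_subset_range {x : ℝ} (hx0 : 0 ≤ x) (hx1 : x < 1) {s : Finset ℕ} {k : ℕ}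
    (hs : s ⊆ range (k + 1)) :
    ∑ l ∈ s, x ^ (k - l) ≤ 1 / (1 - x) :=
  calc ∑ l ∈ s, x ^ (k - l)
      ≤ ∑ l ∈ range (k + 1), x ^ (k - l) :=
        sum_le_sum_of_subset_of_nonneg hs fun _ _ _ => pow_nonneg hx0 _
    _ = ∑ j ∈ Ico 0 (k + 1), x ^ j := by
        rw [← range_eq_Ico, ← sum_range_reflect]
        refine sum_congr rfl fun l hl => ?_
        rw [Nat.add_sub_cancel, Nat.sub_sub_self (Nat.lt_succ_iff.mp (mem_range.mp hl))]
    _ ≤ 1 / (1 - x) := by simpa using geom_sum_Ico_le_of_lt_one (m := 0) hx0 hx1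

lemma sum_Ico_half_pow_sub_mul_one_div_succ_le {x : ℝ} (hx0 : 0 ≤ x) (hx1 : x < 1) (k : ℕ) :
    ∑ l ∈ Ico ((k + 1) / 2) (k + 1), x ^ (k - l) * (1 / ((l : ℝ) + 1))
      ≤ 1 / (1 - x) * (2 / ((k : ℝ) + 1)) :=
  calc ∑ l ∈ Ico ((k + 1) / 2) (k + 1), x ^ (k - l) * (1 / ((l : ℝ) + 1))
      ≤ ∑ l ∈ Ico ((k + 1) / 2) (k + 1), x ^ (k - l) * (2 / ((k : ℝ) + 1)) := by
        refine sum_le_sum fun l hl => ?_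
        have hl := (mem_Ico.mp hl).1
        exact mul_le_mul_of_nonneg_left (one_div_succ_le_two_div (by omega)) (pow_nonneg hx0 _)
    _ = (∑ l ∈ Ico ((k + 1) / 2) (k + 1), x ^ (k - l)) * (2 / ((k : ℝ) + 1)) := by
        rw [sum_mul]
    _ ≤ 1 / (1 - x) * (2 / ((k : ℝ) + 1)) := by
        gcongr
        exact sum_pow_sub_le_of_subset_range hx0 hx1 fun l hl => mem_range.mpr (mem_Ico.mp hl).2

lemma sum_range_half_pow_sub_mul_one_div_succ_le {x : ℝ} (hx0 : 0 ≤ x) (hx1 : x < 1)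
    (hpow : ∀ j : ℕ, x ^ j ≤ 1 / ((j : ℝ) + 1)) (k : ℕ) :
    ∑ l ∈ range ((k + 1) / 2), x ^ (k - l) * (1 / ((l : ℝ) + 1))
      ≤ 2 / ((k : ℝ) + 1) * (1 / (1 - x)) := by
  set m := (k + 1) / 2
  have hfar : x ^ (k - m) ≤ 2 / ((k : ℝ) + 1) :=
    (hpow (k - m)).trans <| one_div_succ_le_two_div (by omega)
  calc ∑ l ∈ range m, x ^ (k - l) * (1 / ((l : ℝ) + 1))
      ≤ ∑ l ∈ range m, x ^ (k - m) * x ^ (m - l) := by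
        refine sum_le_sum fun l hl => ?_
        have hl := mem_range.mp hl
        rw [← pow_add, mul_one_div, show k - m + (m - l) = k - l by omega]
        exact div_le_self (pow_nonneg hx0 _) (by linarith [l.cast_nonneg (α := ℝ)])
    _ = x ^ (k - m) * ∑ l ∈ range m, x ^ (m - l) := by rw [mul_sum]
    _ ≤ 2 / ((k : ℝ) + 1) * (1 / (1 - x)) := by
        gcongr
        exact sum_pow_sub_le_of_subset_range hx0 hx1 (range_subset_range.mpr m.le_succ)

lemma sum_range_pow_sub_mul_one_div_succ_le {x : ℝ} (hx0 : 0 ≤ x) (hx1 : x < 1)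
    (hpow : ∀ j : ℕ, x ^ j ≤ 1 / ((j : ℝ) + 1)) (k : ℕ) :
    ∑ l ∈ range (k + 1), x ^ (k - l) * (1 / ((l : ℝ) + 1)) ≤ 4 / ((1 - x) * ((k : ℝ) + 1)) := by
  have hx : 0 < 1 - x := by linarith
  rw [← sum_range_add_sum_Ico _ (by omega : (k + 1) / 2 ≤ k + 1)]
  calc _ ≤ 2 / ((k : ℝ) + 1) * (1 / (1 - x)) + 1 / (1 - x) * (2 / ((k : ℝ) + 1)) :=
        add_le_add (sum_range_half_pow_sub_mul_one_div_succ_le hx0 hx1 hpow k)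
          (sum_Ico_half_pow_sub_mul_one_div_succ_le hx0 hx1 k)
    _ = 4 / ((1 - x) * ((k : ℝ) + 1)) := by
        field_simp
        ring

/-- Discrete convolution-series inequality of Lemma 10: with geometric factor `λ ∈ (0,1)`
satisfying `λ^j ≤ 1/(j+1)` and diminishing step sizes `γ/(l+1)`,
`∑_{l=0}^{k} λ^{k−l} γ/(l+1) ≤ 4γ/((1−λ)(k+1))`. -/
theorem convolution_series_bound (lam γ : ℝ) (hlam0 : 0 < lam) (hlam1 : lam < 1) (hγ : 0 < γ)
    (hj : ∀ j : ℕ, lam ^ j ≤ 1 / ((j : ℝ) + 1)) :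
    ∀ k : ℕ, ∑ l ∈ Finset.range (k+1), lam ^ (k - l) * (γ / ((l : ℝ) + 1))
      ≤ 4 * γ / ((1 - lam) * ((k : ℝ) + 1)) := by
  intro k
  calc ∑ l ∈ range (k + 1), lam ^ (k - l) * (γ / ((l : ℝ) + 1))
      = γ * ∑ l ∈ range (k + 1), lam ^ (k - l) * (1 / ((l : ℝ) + 1)) := by
        rw [mul_sum]
        exact sum_congr rfl fun l _ => by ring
    _ ≤ γ * (4 / ((1 - lam) * ((k : ℝ) + 1))) :=
        mul_le_mul_of_nonneg_left
          (sum_range_pow_sub_mul_one_div_succ_le hlam0.le hlam1 hj k) hγ.le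
    _ = 4 * γ / ((1 - lam) * ((k : ℝ) + 1)) := by ring
end

section
/- Let 0 ≤ c < c' be real numbers, and let Q denote the stochastic quantizer on [c, c'], i.e., for z ∈ [c, c'], Q(z) = c with probability (c' − z)/(c' − c) and Q(z) = c' with probability (z − c)/(c' − c). Then for any x, y ∈ [c, c'] with |x − y| ≤ C₄ and any subset S ⊆ {c, c'}, |Pr(Q(x) ∈ S) − Pr(Q(y) ∈ S)| ≤ C₄/(c' − c). In particular, if the spacing is c' − c = π a/(l − 1) for reals π, a > 0 and an integer l ≥ 2, then the quantizer satisfies (0, δ)-differential privacy on such pairs with δ = C₄ (l − 1)/(π a). -/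
/-!
The probability `Pr(Q(z) ∈ S)` is affine in `z` with slope `(1_S(c') - 1_S(c)) / (c' - c)`,
whose numerator has absolute value at most `1`. Hence the two probabilities at `x` and `y`
differ by at most `|x - y| / (c' - c) ≤ C₄ / (c' - c)`.
-/

open MeasureTheory

noncomputable def quantizerLaw (c c' z : ℝ) : Measure ℝ :=
  ENNReal.ofReal ((c' - z)/(c' - c)) • Measure.dirac c
    + ENNReal.ofReal ((z - c)/(c' - c)) • Measure.dirac c'

lemma quantizerLaw_toReal_apply {c c' z : ℝ} (hz : z ∈ Set.Icc c c') (S : Set ℝ) :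
    (quantizerLaw c c' z S).toReal
      = (c' - z) / (c' - c) * S.indicator 1 c + (z - c) / (c' - c) * S.indicator 1 c' := by
  have hlen : 0 ≤ c' - c := sub_nonneg.2 (hz.1.trans hz.2)
  have hlow : 0 ≤ (c' - z) / (c' - c) := div_nonneg (sub_nonneg.2 hz.2) hlen
  have hhigh : 0 ≤ (z - c) / (c' - c) := div_nonneg (sub_nonneg.2 hz.1) hlen
  by_cases hc : c ∈ S <;> by_cases hc' : c' ∈ S <;>
    simp [quantizerLaw, hc, hc', ENNReal.toReal_add, hlow, hhigh]

lemma abs_indicator_one_sub_indicator_one_le {α : Type*} (S : Set α) (a b : α) :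
    |S.indicator (1 : α → ℝ) a - S.indicator 1 b| ≤ 1 := by
  by_cases ha : a ∈ S <;> by_cases hb : b ∈ S <;> simp [ha, hb]

lemma quantizerLaw_toReal_sub {c c' x y : ℝ} (hx : x ∈ Set.Icc c c') (hy : y ∈ Set.Icc c c')
    (S : Set ℝ) :
    (quantizerLaw c c' x S).toReal - (quantizerLaw c c' y S).toReal
      = (x - y) / (c' - c) * (S.indicator 1 c' - S.indicator 1 c) := by
  rw [quantizerLaw_toReal_apply hx, quantizerLaw_toReal_apply hy]
  ring

lemma abs_quantizerLaw_toReal_sub_le {c c' x y : ℝ} (hx : x ∈ Set.Icc c c')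
    (hy : y ∈ Set.Icc c c') (S : Set ℝ) :
    |(quantizerLaw c c' x S).toReal - (quantizerLaw c c' y S).toReal| ≤ |x - y| / (c' - c) := by
  have hlen : 0 ≤ c' - c := sub_nonneg.2 (hx.1.trans hx.2)
  rw [quantizerLaw_toReal_sub hx hy, abs_mul, abs_div, abs_of_nonneg hlen]
  exact mul_le_of_le_one_right (by positivity) (abs_indicator_one_sub_indicator_one_le S c' c)

theorem quantizer_differential_privacy_general (c c' C4 : ℝ)
    (π a : ℝ) (l : ℕ)
    (x y : ℝ) (hx : x ∈ Set.Icc c c') (hy : y ∈ Set.Icc c c')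
    (hxy : |x - y| ≤ C4) (S : Set ℝ) :
    |(quantizerLaw c c' x S).toReal - (quantizerLaw c c' y S).toReal| ≤ C4/(c' - c)
    ∧ (c' - c = π*a/((l : ℝ) - 1) →
        |(quantizerLaw c c' x S).toReal - (quantizerLaw c c' y S).toReal|
          ≤ C4 * ((l : ℝ) - 1)/(π*a)) := by
  have hbound := (abs_quantizerLaw_toReal_sub_le hx hy S).trans
    (div_le_div_of_nonneg_right hxy (sub_nonneg.2 (hx.1.trans hx.2)))
  refine ⟨hbound, fun hspacing => ?_⟩
  rwa [hspacing, div_div_eq_mul_div] at hbound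

/-- Proposition 4, Case 1 (same-sign differential-privacy bound of the stochastic
quantizer): for `x, y ∈ [c, c']` with `|x − y| ≤ C₄` and any `S ⊆ {c, c'}`,
`|Pr(Q(x) ∈ S) − Pr(Q(y) ∈ S)| ≤ C₄/(c' − c)`; in particular, if the spacing is
`c' − c = πa/(l − 1)` the quantizer is `(0, δ)`-differentially private on such pairs
with `δ = C₄(l − 1)/(πa)`. -/
theorem quantizer_differential_privacy (c c' C4 : ℝ) (hc0 : 0 ≤ c) (hcc : c < c')
    (π a : ℝ) (hπ : 0 < π) (ha : 0 < a) (l : ℕ) (hl : 2 ≤ l)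
    (x y : ℝ) (hx : x ∈ Set.Icc c c') (hy : y ∈ Set.Icc c c')
    (hxy : |x - y| ≤ C4) (S : Set ℝ) (hS : S ⊆ {c, c'}) :
    |(quantizerLaw c c' x S).toReal - (quantizerLaw c c' y S).toReal| ≤ C4/(c' - c)
    ∧ (c' - c = π*a/((l : ℝ) - 1) →
        |(quantizerLaw c c' x S).toReal - (quantizerLaw c c' y S).toReal|
          ≤ C4 * ((l : ℝ) - 1)/(π*a)) :=
  quantizer_differential_privacy_general c c' C4 π a l x y hx hy hxy S
end

section
/- Let U be a symmetric positive definite M × M real matrix with smallest eigenvalue λ_min > 0, and let A = diag(a_1, …, a_M) be a diagonal matrix with 0 < a_i < λ_min/(1 + λ_min) for every i. Then the 2M × 2M block matrix P = [[U − A, A], [A, I − A]] is positive semidefinite. -/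
/-!
Writing `D = I - A`, which is positive definite because every `aᵢ < 1`, the Schur complement
of `D` in `P` is `U - A - A D⁻¹ A = U - diag(aᵢ / (1 - aᵢ))`. The bound `aᵢ < λ_min / (1 + λ_min)`
is exactly `aᵢ / (1 - aᵢ) < λ_min`, so this complement is `U - λ_min I`, which is positive
semidefinite, plus a nonnegative diagonal matrix.
-/

open Matrix
open scoped ComplexOrder

namespace Matrix

variable {n : Type*} [Fintype n] [DecidableEq n]

theorem IsHermitian.posSemidef_sub_smul_one {𝕜 : Type*} [RCLike 𝕜] {A : Matrix n n 𝕜}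
    (hA : A.IsHermitian) {c : ℝ} (hc : ∀ i, c ≤ hA.eigenvalues i) :
    (A - c • 1).PosSemidef := by
  rw [RCLike.real_smul_eq_coe_smul (K := 𝕜)]
  refine posSemidef_iff_isHermitian_and_spectrum_nonneg.mpr
    ⟨hA.sub (isHermitian_one.smul (RCLike.conj_ofReal c)), ?_⟩
  rw [← Algebra.algebraMap_eq_smul_one, ← spectrum.sub_singleton_eq, hA.spectrum_eq_image_range]
  rintro _ ⟨_, ⟨_, ⟨i, rfl⟩, rfl⟩, _, rfl, rfl⟩
  show (0 : 𝕜) ≤ (hA.eigenvalues i : 𝕜) - c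
  rw [← RCLike.ofReal_sub, RCLike.ofReal_nonneg]
  exact sub_nonneg.mpr (hc i)

theorem IsHermitian.posSemidef_sub_diagonal {A : Matrix n n ℝ} (hA : A.IsHermitian) {c : ℝ}
    (hc : ∀ i, c ≤ hA.eigenvalues i) {d : n → ℝ} (hd : ∀ i, d i ≤ c) :
    (A - diagonal d).PosSemidef := by
  have hsplit : A - diagonal d = (A - c • 1) + diagonal fun i => c - d i := by
    rw [← diagonal_sub, ← smul_one_eq_diagonal]
    abel
  rw [hsplit]
  exact (hA.posSemidef_sub_smul_one hc).add (PosSemidef.diagonal fun i => sub_nonneg.mpr (hd i))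

theorem posSemidef_fromBlocks_diagonal_iff (A : Matrix n n ℝ) {a : n → ℝ} (ha : ∀ i, a i < 1) :
    (fromBlocks (A - diagonal a) (diagonal a) (diagonal a) (1 - diagonal a)).PosSemidef ↔
      (A - diagonal fun i => a i / (1 - a i)).PosSemidef := by
  have hpos i : 0 < 1 - a i := sub_pos.mpr (ha i)
  have hD : 1 - diagonal a = diagonal fun i => 1 - a i := by rw [← diagonal_one, diagonal_sub]
  have hDinv : (1 - diagonal a)⁻¹ = diagonal fun i => (1 - a i)⁻¹ := by
    refine inv_eq_left_inv ?_
    rw [hD, diagonal_mul_diagonal, ← diagonal_one]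
    exact congrArg diagonal (funext fun i => inv_mul_cancel₀ (hpos i).ne')
  have hDpos : (1 - diagonal a).PosDef := hD ▸ PosDef.diagonal hpos
  have := hDpos.isUnit.invertible
  have hschur := hDpos.fromBlocks₂₂ (A - diagonal a) (diagonal a)
  rw [diagonal_conjTranspose, star_trivial] at hschur
  rw [hschur, hDinv, diagonal_mul_diagonal, diagonal_mul_diagonal, sub_sub, diagonal_add]
  congr! 3
  funext i
  field_simp [(hpos i).ne']
  ring

end Matrix

theorem blockMatrix_posSemidef_general {M : ℕ}
    (U : Matrix (Fin M) (Fin M) ℝ) (hU : U.PosDef)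
    (lammin : ℝ) (hlam : lammin = ⨅ i, hU.1.eigenvalues i) (hlampos : 0 < lammin)
    (a : Fin M → ℝ) (ha : ∀ i, 0 < a i ∧ a i < lammin / (1 + lammin)) :
    (Matrix.fromBlocks (U - Matrix.diagonal a) (Matrix.diagonal a)
      (Matrix.diagonal a) (1 - Matrix.diagonal a)).PosSemidef := by
  have hlam_le i : lammin ≤ hU.1.eigenvalues i := hlam ▸ ciInf_le (Finite.bddBelow_range _) i
  have ha_lt i : a i * (1 + lammin) < lammin := (lt_div_iff₀ (by linarith)).mp (ha i).2
  have ha_one i : a i < 1 := by nlinarith [ha_lt i]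
  rw [posSemidef_fromBlocks_diagonal_iff U ha_one]
  refine hU.1.posSemidef_sub_diagonal hlam_le fun i => ?_
  rw [div_le_iff₀ (sub_pos.mpr (ha_one i))]
  linarith [ha_lt i]

/-- Positive semidefiniteness of the MSP-FL state-transition block matrix
`P = [[U − A, A], [A, I − A]]`, where `U` is symmetric positive definite with smallest
eigenvalue `λ_min > 0` and `A = diag(a₁, …, a_M)` with `0 < aᵢ < λ_min/(1 + λ_min)`
(proved via the Schur complement in Lemma 8). -/
theorem blockMatrix_posSemidef {M : ℕ} (hM : 0 < M)
    (U : Matrix (Fin M) (Fin M) ℝ) (hU : U.PosDef)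
    (lammin : ℝ) (hlam : lammin = ⨅ i, hU.1.eigenvalues i) (hlampos : 0 < lammin)
    (a : Fin M → ℝ) (ha : ∀ i, 0 < a i ∧ a i < lammin / (1 + lammin)) :
    (Matrix.fromBlocks (U - Matrix.diagonal a) (Matrix.diagonal a)
      (Matrix.diagonal a) (1 - Matrix.diagonal a)).PosSemidef :=
  blockMatrix_posSemidef_general U hU lammin hlam hlampos a ha
end
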